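/- Let 𝒜 be a finite distributive lattice and v an isotone valuation on 𝒜 that is positive on nonzero elements, and let α : E → ℝ and β : D → ℝ be acts. Then: (1) if E = D, then α ◁ β if and only if α ≼_E β; (2) α ≼_v β implies α ◁ β, and if α ◁ β and E ≤ D then α ≼_v β. -/
import Mathlib


variable {A : Type*} [DistribLattice A] [BoundedOrder A]

/-- `E` is an algebraic partition of the bounded distributive lattice `A`:
its join is `⊤`, distinct elements meet to `⊥`, and `⊥ ∉ E`. -/
def IsPartition (E : Finset A) : Prop :=
  E.sup id = ⊤ ∧ (∀ x ∈ E, ∀ y ∈ E, x ≠ y → x ⊓ y = ⊥) ∧ ⊥ ∉ E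

/-- `E` is a refinement of `D`: every element of `E` lies below some element of `D`. -/
def Refines (E D : Finset A) : Prop :=
  ∀ e ∈ E, ∃ d ∈ D, e ≤ d

/-- The preference relation `α ≼_v β` for acts `α : E → ℝ` and `β : D → ℝ`:
`E ≤ D` and for every `e ∈ E`, `α e ≤ β d_e · v e / v d_e` (where `d_e` is the
unique element of `D` above `e`, expressed by quantifying over all such `d`). -/
def PrefV (v : A → ℝ) (E D : Finset A) (α β : A → ℝ) : Prop :=
  Refines E D ∧ ∀ e ∈ E, ∀ d ∈ D, e ≤ d → α e ≤ β d * v e / v d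

lemma part_ne_bot {E : Finset A} (hE : IsPartition E) {x : A} (hx : x ∈ E) : x ≠ ⊥ :=
  fun h => hE.2.2 (h ▸ hx)

lemma part_unique {E : Finset A} (hE : IsPartition E) {x y z : A}
    (hx : x ∈ E) (hy : y ∈ E) (hz : z ≠ ⊥) (h1 : z ≤ x) (h2 : z ≤ y) : x = y := by
  by_contra h
  exact hz (le_bot_iff.mp ((le_inf h1 h2).trans_eq (hE.2.1 _ hx _ hy h)))

lemma exists_below {E M : Finset A} (hE : IsPartition E) (hM : IsPartition M)
    (hME : Refines M E) {e : A} (he : e ∈ E) : ∃ z ∈ M, z ≤ e := by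
  by_contra h
  push_neg at h
  have hbot : e = ⊥ := by
    have : e = e ⊓ M.sup id := by rw [hM.1, inf_top_eq]
    rw [this, Finset.sup_inf_distrib_left]
    rw [Finset.sup_eq_bot_iff]
    intro z hz
    obtain ⟨e', he', hze'⟩ := hME z hz
    have hne : e ≠ e' := fun heq => h z hz (heq ▸ hze')
    exact le_bot_iff.mp (calc e ⊓ id z ≤ e ⊓ e' := inf_le_inf_left _ hze'
    _ = ⊥ := hE.2.1 _ he _ he' hne)
  exact part_ne_bot hE he hbot

/-- Properties of the relation `α ◁ β`, defined as `α_{E∧D} ≼_{E∧D} β_{E∧D}`: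
(1) if `E = D` then `α ◁ β ↔ α ≼_E β`; (2) `α ≼_v β` implies `α ◁ β`, and
`α ◁ β` together with `E ≤ D` implies `α ≼_v β`.  Here `M` is the meet `E ∧ D`
in the refinement order and `αM`, `βM` are the downgrades of `α`, `β` to `M`. -/
theorem stmt_8 [Fintype A] (v : A → ℝ)
    (hval : ∀ a b : A, v (a ⊔ b) = v a + v b - v (a ⊓ b))
    (hiso : ∀ a b : A, a ≤ b → v a ≤ v b)
    (hpos : ∀ a : A, a ≠ ⊥ → 0 < v a)
    (E D M : Finset A) (hE : IsPartition E) (hD : IsPartition D) (hM : IsPartition M)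
    (hME : Refines M E) (hMD : Refines M D)
    (hglb : ∀ Z : Finset A, IsPartition Z → Refines Z E → Refines Z D → Refines Z M)
    (α β αM βM : A → ℝ)
    (hαM : ∀ z ∈ M, ∀ e ∈ E, z ≤ e → αM z = α e * v z / v e)
    (hβM : ∀ z ∈ M, ∀ d ∈ D, z ≤ d → βM z = β d * v z / v d) :
    (E = D → ((∀ z ∈ M, αM z ≤ βM z) ↔ ∀ e ∈ E, α e ≤ β e)) ∧
    (PrefV v E D α β → ∀ z ∈ M, αM z ≤ βM z) ∧
    ((∀ z ∈ M, αM z ≤ βM z) → Refines E D → PrefV v E D α β) := by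
  refine ⟨?_, ?_, ?_⟩
  · rintro rfl
    constructor
    · intro h e he
      obtain ⟨z, hz, hze⟩ := exists_below hE hM hME he
      have h1 := hαM z hz e he hze
      have h2 := hβM z hz e he hze
      have hvz := hpos z (part_ne_bot hM hz)
      have hve := hpos e (part_ne_bot hE he)
      have := h z hz
      rw [h1, h2] at this
      have := (div_le_div_iff_of_pos_right hve).mp this
      exact le_of_mul_le_mul_right this hvz
    · intro h z hz
      obtain ⟨e, he, hze⟩ := hME z hz
      rw [hαM z hz e he hze, hβM z hz e he hze]
      have hvz := (hpos z (part_ne_bot hM hz)).le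
      have hve := hpos e (part_ne_bot hE he)
      gcongr
      exact h e he
  · rintro ⟨hED, hpref⟩ z hz
    obtain ⟨e, he, hze⟩ := hME z hz
    obtain ⟨d, hd, hzd⟩ := hMD z hz
    obtain ⟨d', hd', hed'⟩ := hED e he
    have hzbot := part_ne_bot hM hz
    have hdd : d = d' := part_unique hD hd hd' hzbot hzd (hze.trans hed')
    subst hdd
    have hkey := hpref e he d hd hed'
    rw [hαM z hz e he hze, hβM z hz d hd hzd]
    have hve := hpos e (part_ne_bot hE he)
    have hvd := hpos d (part_ne_bot hD hd)
    have hvz := (hpos z hzbot).le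
    calc α e * v z / v e ≤ (β d * v e / v d) * v z / v e := by gcongr
    _ = β d * v z / v d := by field_simp
  · intro h hED
    refine ⟨hED, fun e he d hd hed => ?_⟩
    obtain ⟨z, hz, hez⟩ := hglb E hE (fun x hx => ⟨x, hx, le_rfl⟩) hED e he
    obtain ⟨e', he', hze'⟩ := hME z hz
    have hebot := part_ne_bot hE he
    have hee : e = e' := part_unique hE he he' hebot le_rfl (hez.trans hze')
    have hze : z = e := le_antisymm (hee ▸ hze') hez
    subst hze
    have h1 := hαM z hz z he le_rfl
    have h2 := hβM z hz d hd (hez.trans hed)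
    have hvz := hpos z hebot
    have := h z hz
    rw [h1, h2] at this
    rw [mul_div_assoc, div_self hvz.ne', mul_one] at this
    exact this
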